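/- Let L ∈ ℝ^{N×N} be the Laplacian of a connected weighted undirected graph (L symmetric, positive semidefinite, L𝟙_N = 0, with 0 a simple eigenvalue), let A, B ∈ ℝ^{n×n}, E ∈ ℝ^{n×r}, and M ∈ ℝ^{N×m} have columns e_{v₁},…,e_{v_m} for distinct leader nodes v₁,…,v_m. Assume A − λB is Hurwitz for every nonzero eigenvalue λ of L. Let π be an almost equitable partition with characteristic matrix P (so L(Im P) ⊆ Im P), L̂ = (PᵀP)⁻¹PᵀLP, M̂ = (PᵀP)⁻¹PᵀM. Define S(s) = (L⊗I_n)(sI − I_N⊗A + L⊗B)⁻¹(M⊗E) and Ŝ(s) = (LP⊗I_n)(sI − I_k⊗A + L̂⊗B)⁻¹(M̂⊗E). Then ‖S − Ŝ‖²_{H₂} = ‖S‖²_{H₂} − ‖Ŝ‖²_{H₂}. -/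

import Mathlib

open Matrix Filter Topology Function
open scoped Kronecker

noncomputable section

/-- Complexification of a real matrix. -/
def cplx {α β : Type*} (M : Matrix α β ℝ) : Matrix α β ℂ := M.map Complex.ofReal

/-- Transfer function `S(s) = C (sI - A)⁻¹ B` of the system `ẋ = Ax + Bu, y = Cx`. -/
def transfer {n m p : ℕ} (A : Matrix (Fin n) (Fin n) ℝ) (B : Matrix (Fin n) (Fin m) ℝ)
    (C : Matrix (Fin p) (Fin n) ℝ) (s : ℂ) : Matrix (Fin p) (Fin m) ℂ :=
  cplx C * (s • (1 : Matrix (Fin n) (Fin n) ℂ) - cplx A)⁻¹ * cplx B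

/-- Squared H₂-norm: `(1/2π) ∫ tr(S(-iω)ᵀ S(iω)) dω`. -/
def H2normSq {α β : Type*} [Fintype α] [Fintype β] (S : ℂ → Matrix α β ℂ) : ℝ :=
  (1 / (2 * Real.pi)) *
    ∫ ω : ℝ, ((S (-((ω : ℂ) * Complex.I)))ᵀ * S ((ω : ℂ) * Complex.I)).trace.re

/-- Largest singular value of a complex matrix (its ℓ²-operator norm). -/
def sigmaMax {α β : Type*} [Fintype α] [Fintype β] [DecidableEq β] (M : Matrix α β ℂ) : ℝ :=
  ‖LinearMap.toContinuousLinearMap (Matrix.toEuclideanLin M)‖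

/-- Smallest singular value of a complex matrix: `√(λ_min(Mᴴ M))`. -/
def sigmaMinC {α β : Type*} [Fintype α] [Fintype β] [DecidableEq β] (M : Matrix α β ℂ) : ℝ :=
  Real.sqrt (sInf (spectrum ℝ (Mᴴ * M)))

/-- H∞-norm: `sup_{ω ∈ ℝ} σ_max(S(iω))`. -/
def HinfNorm {α β : Type*} [Fintype α] [Fintype β] [DecidableEq β] (S : ℂ → Matrix α β ℂ) : ℝ :=
  ⨆ ω : ℝ, sigmaMax (S ((ω : ℂ) * Complex.I))

/-- Generalized unstable subspace `X₊(A)`: direct sum of the generalized eigenspaces of (the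
complexification of) `A` corresponding to eigenvalues with nonnegative real part. -/
def unstableSubspace {n : ℕ} (A : Matrix (Fin n) (Fin n) ℝ) : Submodule ℂ (Fin n → ℂ) :=
  ⨆ μ ∈ {μ : ℂ | 0 ≤ μ.re}, Module.End.maxGenEigenspace (Matrix.toLin' (cplx A)) μ

/-- A complex square matrix is Hurwitz if all its eigenvalues have negative real part. -/
def IsHurwitz {n : ℕ} (M : Matrix (Fin n) (Fin n) ℂ) : Prop :=
  ∀ μ ∈ spectrum ℂ M, μ.re < 0

/-- Transfer function `S_λ(s) = λ (sI - A + λB)⁻¹ E` of the auxiliary system. -/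
def auxS {n r : ℕ} (A B : Matrix (Fin n) (Fin n) ℝ) (E : Matrix (Fin n) (Fin r) ℝ)
    (lam : ℝ) (s : ℂ) : Matrix (Fin n) (Fin r) ℂ :=
  (lam : ℂ) • ((s • (1 : Matrix (Fin n) (Fin n) ℂ) - cplx A + (lam : ℂ) • cplx B)⁻¹ * cplx E)

/-- Transfer function `S(s) = (L⊗Iₙ)(sI - I_N⊗A + L⊗B)⁻¹(M⊗E)` of the original network. -/
def netS {N n r m : ℕ} (L : Matrix (Fin N) (Fin N) ℝ) (A B : Matrix (Fin n) (Fin n) ℝ)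
    (E : Matrix (Fin n) (Fin r) ℝ) (M : Matrix (Fin N) (Fin m) ℝ) (s : ℂ) :
    Matrix (Fin N × Fin n) (Fin m × Fin r) ℂ :=
  cplx (L ⊗ₖ (1 : Matrix (Fin n) (Fin n) ℝ)) *
    (s • (1 : Matrix (Fin N × Fin n) (Fin N × Fin n) ℂ) -
      cplx ((1 : Matrix (Fin N) (Fin N) ℝ) ⊗ₖ A - L ⊗ₖ B))⁻¹ *
    cplx (M ⊗ₖ E)

/-- Transfer function `Ŝ(s) = (LP⊗Iₙ)(sI - I_k⊗A + L̂⊗B)⁻¹(M̂⊗E)` of the reduced network. -/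
def netShat {N n r m k : ℕ} (L : Matrix (Fin N) (Fin N) ℝ) (P : Matrix (Fin N) (Fin k) ℝ)
    (Lhat : Matrix (Fin k) (Fin k) ℝ) (Mhat : Matrix (Fin k) (Fin m) ℝ)
    (A B : Matrix (Fin n) (Fin n) ℝ) (E : Matrix (Fin n) (Fin r) ℝ) (s : ℂ) :
    Matrix (Fin N × Fin n) (Fin m × Fin r) ℂ :=
  cplx ((L * P) ⊗ₖ (1 : Matrix (Fin n) (Fin n) ℝ)) *
    (s • (1 : Matrix (Fin k × Fin n) (Fin k × Fin n) ℂ) -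
      cplx ((1 : Matrix (Fin k) (Fin k) ℝ) ⊗ₖ A - Lhat ⊗ₖ B))⁻¹ *
    cplx (Mhat ⊗ₖ E)

/-- Transfer function `S(s) = L (sI + L)⁻¹ M` of the single-integrator network. -/
def singleS {N m : ℕ} (L : Matrix (Fin N) (Fin N) ℝ) (M : Matrix (Fin N) (Fin m) ℝ)
    (s : ℂ) : Matrix (Fin N) (Fin m) ℂ :=
  cplx L * (s • (1 : Matrix (Fin N) (Fin N) ℂ) + cplx L)⁻¹ * cplx M

/-- Transfer function `Ŝ(s) = LP (sI + L̂)⁻¹ M̂` of the reduced single-integrator network. -/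
def singleShat {N m k : ℕ} (L : Matrix (Fin N) (Fin N) ℝ) (P : Matrix (Fin N) (Fin k) ℝ)
    (Lhat : Matrix (Fin k) (Fin k) ℝ) (Mhat : Matrix (Fin k) (Fin m) ℝ) (s : ℂ) :
    Matrix (Fin N) (Fin m) ℂ :=
  cplx (L * P) * (s • (1 : Matrix (Fin k) (Fin k) ℂ) + cplx Lhat)⁻¹ * cplx Mhat

/-- Squared Frobenius norm `‖M‖_F² = tr(MᵀM)`. -/
def frobSq {α β : Type*} [Fintype α] [Fintype β] (M : Matrix α β ℝ) : ℝ := (Mᵀ * M).trace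

end

/-!
For an almost equitable partition `L P = P L̂`, so the orthogonal projection `Π = P (PᵀP)⁻¹ Pᵀ`
onto `Im P` commutes with the symmetric `L`. Hence `Ŝ(s) = (Π ⊗ I) S(s)` wherever both resolvents
exist, and `S - Ŝ = ((I - Π) ⊗ I) S`. Pythagoras in the Frobenius norm splits `‖S(iω)‖²` pointwise
into `‖Ŝ(iω)‖² + ‖(S - Ŝ)(iω)‖²`, and since real transfer functions satisfy `S(-iω)ᵀ = S(iω)ᴴ`,
integrating gives the identity. Integrability comes from diagonalising `L = U D Uᵀ`: the block of
the eigenvalue `0` is annihilated by the factor `L ⊗ I`, and every other block is a resolvent of the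
Hurwitz matrix `A - λB`, whose squared norm on the imaginary axis decays like `1/(1 + ω²)`.
-/

open MeasureTheory Complex

section ResolventAlgebra

variable {ι κ o β R : Type*} [Fintype ι] [DecidableEq ι] [Fintype κ] [DecidableEq κ]
  [Fintype o] [DecidableEq o] [CommRing R]

lemma mul_inv_eq_inv_mul_of_mul_eq {X : Matrix ι ι R} {Y : Matrix κ κ R} {V : Matrix ι κ R}
    (hX : IsUnit X.det) (hY : IsUnit Y.det) (h : X * V = V * Y) : V * Y⁻¹ = X⁻¹ * V := by
  calc V * Y⁻¹ = X⁻¹ * (X * V) * Y⁻¹ := by rw [nonsing_inv_mul_cancel_left _ _ hX]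
    _ = X⁻¹ * V := by rw [h, ← Matrix.mul_assoc, mul_nonsing_inv_cancel_right _ _ hY]

lemma smul_one_sub_mul_eq {A : Matrix ι ι R} {Ar : Matrix κ κ R} {V : Matrix ι κ R}
    (h : A * V = V * Ar) (s : R) : (s • 1 - A) * V = V * (s • 1 - Ar) := by
  rw [Matrix.sub_mul, Matrix.mul_sub, Matrix.smul_mul, Matrix.mul_smul, Matrix.one_mul,
    Matrix.mul_one, h]

/-- Reduction along an `A`-invariant subspace `Im V`: the reduced transfer function is `Q` times
the full one. -/
lemma mul_resolvent_mul_eq_of_intertwine {A Q C : Matrix ι ι R} {Ar : Matrix κ κ R}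
    {V : Matrix ι κ R} {B : Matrix ι β R} {Br : Matrix κ β R} {s : R}
    (hA : IsUnit (s • 1 - A).det) (hAr : IsUnit (s • 1 - Ar).det)
    (hAV : A * V = V * Ar) (hQA : Q * A = A * Q) (hQC : Q * C = C * Q) (hVB : V * Br = Q * B) :
    C * V * (s • 1 - Ar)⁻¹ * Br = Q * (C * (s • 1 - A)⁻¹ * B) := by
  have hV := mul_inv_eq_inv_mul_of_mul_eq hA hAr (smul_one_sub_mul_eq hAV s)
  have hQ := mul_inv_eq_inv_mul_of_mul_eq hA hA (smul_one_sub_mul_eq hQA.symm s)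
  calc C * V * (s • 1 - Ar)⁻¹ * Br = C * (s • 1 - A)⁻¹ * (V * Br) := by
        rw [Matrix.mul_assoc C, hV]; simp only [Matrix.mul_assoc]
    _ = Q * (C * (s • 1 - A)⁻¹ * B) := by
        rw [hVB, ← Matrix.mul_assoc, Matrix.mul_assoc C, ← hQ, ← Matrix.mul_assoc, ← hQC]
        simp only [Matrix.mul_assoc]

lemma resolvent_conj {V W : Matrix ι ι R} (hVW : V * W = 1) (A : Matrix ι ι R) (s : R) :
    (s • 1 - V * A * W)⁻¹ = V * (s • 1 - A)⁻¹ * W := by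
  have hconj : s • 1 - V * A * W = V * (s • 1 - A) * W := by
    rw [Matrix.mul_sub, Matrix.sub_mul, Matrix.mul_smul, Matrix.mul_one, Matrix.smul_mul, hVW]
  rw [hconj, Matrix.mul_inv_rev, Matrix.mul_inv_rev, inv_eq_left_inv hVW,
    inv_eq_right_inv hVW, Matrix.mul_assoc]

lemma inv_blockDiagonal {f : o → Matrix ι ι R} (hf : ∀ i, IsUnit (f i).det) :
    (blockDiagonal f)⁻¹ = blockDiagonal fun i => (f i)⁻¹ :=
  inv_eq_right_inv <| by
    simp only [← blockDiagonal_mul, mul_nonsing_inv _ (hf _)]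
    exact blockDiagonal_one

lemma blockDiagonal_mul_resolvent (d : o → R) {H : o → Matrix ι ι R} {s : R}
    (hH : ∀ i, IsUnit (s • 1 - H i).det) :
    blockDiagonal (fun i => d i • (1 : Matrix ι ι R)) * (s • 1 - blockDiagonal H)⁻¹ =
      blockDiagonal fun i => d i • (s • 1 - H i)⁻¹ := by
  rw [← blockDiagonal_one, ← blockDiagonal_smul, ← blockDiagonal_sub,
    inv_blockDiagonal (f := s • 1 - H) hH, ← blockDiagonal_mul]
  simp only [Pi.sub_apply, Pi.smul_apply, Pi.one_apply, Matrix.smul_mul, Matrix.one_mul]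

lemma reindex_mul_resolvent (e : ι ≃ κ) (X H : Matrix ι ι R) (s : R) :
    reindex e e X * (s • 1 - reindex e e H)⁻¹ = reindex e e (X * (s • 1 - H)⁻¹) := by
  have hsub : s • 1 - reindex e e H = reindex e e (s • 1 - H) := by
    have h := (map_sub (reindexAlgEquiv R R e) (s • 1) H).symm
    rw [map_smul, map_one] at h
    simpa only [coe_reindexAlgEquiv] using h
  rw [hsub, inv_reindex, reindex_apply, reindex_apply, reindex_apply, submatrix_mul_equiv]

end ResolventAlgebra

section Kronecker

variable {l m n o R : Type*} [Fintype l] [DecidableEq l] [Fintype m] [DecidableEq m]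
  [Fintype n] [DecidableEq n] [CommRing R]

lemma one_kronecker_sub_kronecker_mul {X : Matrix l l R} {Z : Matrix m m R} {Y : Matrix l m R}
    (h : X * Y = Y * Z) (A B : Matrix n n R) :
    ((1 : Matrix l l R) ⊗ₖ A - X ⊗ₖ B) * (Y ⊗ₖ (1 : Matrix n n R)) =
      Y ⊗ₖ (1 : Matrix n n R) * ((1 : Matrix m m R) ⊗ₖ A - Z ⊗ₖ B) := by
  rw [Matrix.sub_mul, Matrix.mul_sub, ← mul_kronecker_mul, ← mul_kronecker_mul,
    ← mul_kronecker_mul, ← mul_kronecker_mul, h]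
  simp only [Matrix.one_mul, Matrix.mul_one]

omit [DecidableEq l] in
lemma conj_kronecker (U X W : Matrix l l R) (Y : Matrix n n R) :
    (U * X * W) ⊗ₖ Y = (U ⊗ₖ 1) * (X ⊗ₖ Y) * (W ⊗ₖ 1) := by
  rw [← mul_kronecker_mul, ← mul_kronecker_mul, Matrix.one_mul, Matrix.mul_one]

lemma one_kronecker_sub_conj_kronecker {U W : Matrix l l R} (hUW : U * W = 1) (X : Matrix l l R)
    (A B : Matrix n n R) :
    1 ⊗ₖ A - (U * X * W) ⊗ₖ B = (U ⊗ₖ 1) * (1 ⊗ₖ A - X ⊗ₖ B) * (W ⊗ₖ 1) := by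
  rw [Matrix.mul_sub, Matrix.sub_mul, ← conj_kronecker, ← conj_kronecker, Matrix.mul_one, hUW]

omit [Fintype l] [Fintype n] [DecidableEq n] in
lemma one_kronecker_sub_diagonal_kronecker (d : l → R) (A B : Matrix n n R) :
    1 ⊗ₖ A - diagonal d ⊗ₖ B =
      reindex (Equiv.prodComm n l) (Equiv.prodComm n l) (blockDiagonal fun i => A - d i • B) := by
  ext ⟨a, i⟩ ⟨b, j⟩
  by_cases h : a = b <;> simp [h, one_apply, blockDiagonal_apply]

end Kronecker

section Complexification

variable {α β γ ι κ : Type*}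

lemma cplx_mul [Fintype β] (M : Matrix α β ℝ) (N : Matrix β γ ℝ) :
    cplx (M * N) = cplx M * cplx N :=
  Matrix.map_mul (f := Complex.ofRealHom)

lemma cplx_one [DecidableEq α] : cplx (1 : Matrix α α ℝ) = 1 :=
  Matrix.map_one _ ofReal_zero ofReal_one

lemma cplx_smul (c : ℝ) (X : Matrix α β ℝ) : cplx (c • X) = (c : ℂ) • cplx X := by
  ext; simp [cplx]

lemma conjTranspose_cplx (M : Matrix α β ℝ) : (cplx M)ᴴ = (cplx M)ᵀ := by
  ext; simp [cplx]

lemma cplx_reindex_blockDiagonal [DecidableEq ι] (e : α × ι ≃ β) (f : ι → Matrix α α ℝ) :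
    cplx (reindex e e (blockDiagonal f)) = reindex e e (blockDiagonal fun i => cplx (f i)) := by
  rw [cplx, reindex_apply, reindex_apply, ← submatrix_map, blockDiagonal_map _ _ ofReal_zero]
  rfl

lemma transpose_cplx_mul_resolvent_mul [Fintype β] [DecidableEq β] (C : Matrix α β ℝ)
    (A : Matrix β β ℝ) (B : Matrix β γ ℝ) (s : ℂ) :
    (cplx C * (star s • (1 : Matrix β β ℂ) - cplx A)⁻¹ * cplx B)ᵀ =
      (cplx C * (s • (1 : Matrix β β ℂ) - cplx A)⁻¹ * cplx B)ᴴ := by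
  rw [conjTranspose_mul, conjTranspose_mul, conjTranspose_nonsing_inv, conjTranspose_sub,
    conjTranspose_smul, conjTranspose_one, conjTranspose_cplx, conjTranspose_cplx,
    conjTranspose_cplx, transpose_mul, transpose_mul, transpose_nonsing_inv, transpose_sub,
    transpose_smul, transpose_one]

lemma transpose_cplx_mul_resolvent_mul_neg_mul_I [Fintype β] [DecidableEq β] (C : Matrix α β ℝ)
    (A : Matrix β β ℝ) (B : Matrix β γ ℝ) (ω : ℝ) :
    (cplx C * ((-((ω : ℂ) * I)) • (1 : Matrix β β ℂ) - cplx A)⁻¹ * cplx B)ᵀ =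
      (cplx C * (((ω : ℂ) * I) • (1 : Matrix β β ℂ) - cplx A)⁻¹ * cplx B)ᴴ := by
  have hstar : star ((ω : ℂ) * I) = -((ω : ℂ) * I) := by simp
  rw [← hstar, transpose_cplx_mul_resolvent_mul]

lemma isStarProjection_cplx_kronecker_one [Fintype ι] [DecidableEq ι] [Fintype κ] [DecidableEq κ]
    {X : Matrix ι ι ℝ} (hX : X * X = X) (hXt : Xᵀ = X) :
    IsStarProjection (cplx (X ⊗ₖ (1 : Matrix κ κ ℝ))) where
  isIdempotentElem := by
    rw [IsIdempotentElem, ← cplx_mul, ← mul_kronecker_mul, hX, Matrix.one_mul]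
  isSelfAdjoint := by
    rw [IsSelfAdjoint, star_eq_conjTranspose, conjTranspose_cplx, cplx, ← transpose_map,
      ← kroneckerMap_transpose, hXt, transpose_one]

end Complexification

section AlmostEquitablePartition

variable {ι κ K : Type*} [Fintype ι] [Fintype κ] [DecidableEq κ] [Field K]

omit [Fintype κ] in
lemma transpose_mul_self_of_eq_ite (c : ι → κ) :
    (of fun i j => if c i = j then (1 : K) else 0)ᵀ *
      (of fun i j => if c i = j then (1 : K) else 0) =
      diagonal fun j => ((Finset.univ.filter fun i => c i = j).card : K) := by
  ext j j'
  simp only [mul_apply, transpose_apply, of_apply, diagonal_apply, mul_ite, mul_one, mul_zero]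
  by_cases h : j = j'
  · subst h; simp [Finset.sum_ite, Finset.filter_filter]
  · simp only [if_neg h]
    refine Finset.sum_eq_zero fun i _ => ?_
    split_ifs <;> simp_all

lemma isUnit_det_transpose_mul_self_of_surjective [CharZero K] {c : ι → κ} (hc : Surjective c) :
    IsUnit ((of fun i j => if c i = j then (1 : K) else 0)ᵀ *
      of fun i j => if c i = j then (1 : K) else 0).det := by
  rw [transpose_mul_self_of_eq_ite, det_diagonal, isUnit_iff_ne_zero, Finset.prod_ne_zero_iff]
  intro j _
  obtain ⟨i, rfl⟩ := hc j
  exact Nat.cast_ne_zero.2 (Finset.card_ne_zero.2 ⟨i, by simp⟩)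

lemma exists_mul_eq_of_map_range_le {L : Matrix ι ι K} {P : Matrix ι κ K}
    (hAEP : Submodule.map L.mulVecLin (LinearMap.range P.mulVecLin) ≤
      LinearMap.range P.mulVecLin) :
    ∃ X : Matrix κ κ K, L * P = P * X := by
  have hcol (j : κ) : ∃ u, P *ᵥ u = (L * P) *ᵥ Pi.single j 1 :=
    hAEP ⟨P *ᵥ Pi.single j 1, ⟨_, rfl⟩, by rw [mulVecLin_apply, mulVec_mulVec]⟩
  choose u hu using hcol
  refine ⟨(of u)ᵀ, ?_⟩
  ext i j
  have hij := congrFun (hu j) i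
  rw [mulVec_single_one, col_apply] at hij
  simp [← hij, mulVec, dotProduct, mul_apply]

lemma mul_eq_mul_of_map_range_le {L : Matrix ι ι K} {P : Matrix ι κ K}
    (hP : IsUnit (Pᵀ * P).det)
    (hAEP : Submodule.map L.mulVecLin (LinearMap.range P.mulVecLin) ≤
      LinearMap.range P.mulVecLin) :
    L * P = P * ((Pᵀ * P)⁻¹ * (Pᵀ * L * P)) := by
  obtain ⟨X, hX⟩ := exists_mul_eq_of_map_range_le hAEP
  rw [Matrix.mul_assoc Pᵀ, hX, ← Matrix.mul_assoc Pᵀ, nonsing_inv_mul_cancel_left _ _ hP]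

noncomputable def rangeProj (P : Matrix ι κ K) : Matrix ι ι K := P * (Pᵀ * P)⁻¹ * Pᵀ

variable {P : Matrix ι κ K}

lemma rangeProj_mul_self (hP : IsUnit (Pᵀ * P).det) : rangeProj P * P = P := by
  rw [rangeProj, Matrix.mul_assoc, nonsing_inv_mul_cancel_right _ _ hP]

lemma rangeProj_mul_rangeProj (hP : IsUnit (Pᵀ * P).det) :
    rangeProj P * rangeProj P = rangeProj P := by
  calc rangeProj P * rangeProj P = rangeProj P * P * (Pᵀ * P)⁻¹ * Pᵀ := by
        simp only [rangeProj, Matrix.mul_assoc]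
    _ = rangeProj P := by rw [rangeProj_mul_self hP]; rfl

lemma transpose_rangeProj : (rangeProj P)ᵀ = rangeProj P := by
  rw [rangeProj, transpose_mul, transpose_mul, transpose_transpose, transpose_nonsing_inv,
    transpose_mul, transpose_transpose, Matrix.mul_assoc]

lemma rangeProj_mul_comm {L : Matrix ι ι K} {X : Matrix κ κ K} (hP : IsUnit (Pᵀ * P).det)
    (hL : Lᵀ = L) (hLP : L * P = P * X) : rangeProj P * L = L * rangeProj P := by
  have hfix : rangeProj P * (L * rangeProj P) = L * rangeProj P := by
    have hLr : L * rangeProj P = P * (X * (Pᵀ * P)⁻¹ * Pᵀ) := by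
      simp only [rangeProj, ← Matrix.mul_assoc, hLP]
    rw [hLr, ← Matrix.mul_assoc, rangeProj_mul_self hP]
  calc rangeProj P * L = (L * rangeProj P)ᵀ := by rw [transpose_mul, transpose_rangeProj, hL]
    _ = (rangeProj P * (L * rangeProj P))ᵀ := by rw [hfix]
    _ = rangeProj P * L * rangeProj P := by
      rw [transpose_mul, transpose_mul, transpose_rangeProj, hL]
    _ = L * rangeProj P := by rw [Matrix.mul_assoc, hfix]

end AlmostEquitablePartition

lemma Matrix.IsHermitian.exists_orthogonal_diagonalization {ι : Type*} [Fintype ι]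
    [DecidableEq ι] {L : Matrix ι ι ℝ} (hL : L.IsHermitian) :
    ∃ U : Matrix ι ι ℝ, U * Uᵀ = 1 ∧ L = U * diagonal hL.eigenvalues * Uᵀ := by
  refine ⟨hL.eigenvectorUnitary, ?_, ?_⟩
  · simpa [star_eq_conjTranspose, conjTranspose_eq_transpose_of_trivial] using
      mem_unitaryGroup_iff.mp hL.eigenvectorUnitary.2
  · conv_lhs => rw [hL.spectral_theorem]
    simp [Unitary.conjStarAlgAut_apply, star_eq_conjTranspose,
      conjTranspose_eq_transpose_of_trivial]

section Frobenius

attribute [local instance] Matrix.frobeniusNormedAddCommGroup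

variable {α β ι κ : Type*} [Fintype α] [Fintype β]

lemma sq_frobenius_norm (X : Matrix α β ℂ) : ‖X‖ ^ 2 = ∑ i, ∑ j, ‖X i j‖ ^ 2 := by
  rw [frobenius_norm_def, ← Real.rpow_natCast, ← Real.rpow_mul (by positivity)]
  norm_num

lemma sq_frobenius_norm_eq_re_trace (X : Matrix α β ℂ) : ‖X‖ ^ 2 = (Xᴴ * X).trace.re := by
  simp only [sq_frobenius_norm, trace, diag, mul_apply, conjTranspose_apply, re_sum,
    RCLike.star_def, ← normSq_eq_conj_mul_self, ofReal_re, normSq_eq_norm_sq]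
  exact Finset.sum_comm

lemma sq_frobenius_norm_eq_add_of_isStarProjection [DecidableEq α] {Q : Matrix α α ℂ}
    (hQ : IsStarProjection Q) (X : Matrix α β ℂ) :
    ‖X‖ ^ 2 = ‖Q * X‖ ^ 2 + ‖(1 - Q) * X‖ ^ 2 := by
  have hsplit {R : Matrix α α ℂ} (hR : IsStarProjection R) :
      (R * X)ᴴ * (R * X) = Xᴴ * (R * X) := by
    rw [conjTranspose_mul, Matrix.mul_assoc, ← Matrix.mul_assoc Rᴴ, ← star_eq_conjTranspose,
      hR.isSelfAdjoint.star_eq, hR.isIdempotentElem.eq]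
  rw [sq_frobenius_norm_eq_re_trace, sq_frobenius_norm_eq_re_trace, sq_frobenius_norm_eq_re_trace,
    hsplit hQ, hsplit hQ.one_sub, ← add_re, ← trace_add, ← Matrix.mul_add, ← Matrix.add_mul,
    add_sub_cancel, Matrix.one_mul]

lemma frobenius_norm_reindex [Fintype ι] [Fintype κ] (e : α ≃ ι) (e' : β ≃ κ)
    (X : Matrix α β ℂ) : ‖reindex e e' X‖ = ‖X‖ := by
  rw [← sq_eq_sq₀ (norm_nonneg _) (norm_nonneg _), sq_frobenius_norm, sq_frobenius_norm,
    ← e.sum_comp]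
  refine Finset.sum_congr rfl fun i _ => ?_
  rw [← e'.sum_comp]
  simp

lemma sq_frobenius_norm_blockDiagonal [Fintype ι] [DecidableEq ι] (f : ι → Matrix α α ℂ) :
    ‖blockDiagonal f‖ ^ 2 = ∑ i, ‖f i‖ ^ 2 := by
  simp only [sq_frobenius_norm, Fintype.sum_prod_type, blockDiagonal_apply]
  rw [Finset.sum_comm]
  refine Finset.sum_congr rfl fun i _ => Finset.sum_congr rfl fun a _ => ?_
  rw [Finset.sum_comm, Finset.sum_eq_single i (fun j _ hj => by simp [Ne.symm hj]) (by simp)]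
  simp

lemma sq_norm_mul_reindex_blockDiagonal_mul_le {o n : Type*} [Fintype o] [DecidableEq o]
    [Fintype n] [Fintype ι] (e : n × o ≃ ι) {G : o → ℝ → Matrix n n ℂ} {C : o → ℝ}
    (hG : ∀ i ω, ‖G i ω‖ ^ 2 * (1 + ω ^ 2) ≤ C i) (W : Matrix α ι ℂ) (R : Matrix ι β ℂ)
    (ω : ℝ) :
    ‖W * reindex e e (blockDiagonal fun i => G i ω) * R‖ ^ 2 * (1 + ω ^ 2) ≤
      (‖W‖ * ‖R‖) ^ 2 * ∑ i, C i := by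
  set K := reindex e e (blockDiagonal fun i => G i ω)
  have hK : ‖K‖ ^ 2 * (1 + ω ^ 2) ≤ ∑ i, C i := by
    rw [frobenius_norm_reindex, sq_frobenius_norm_blockDiagonal, Finset.sum_mul]
    exact Finset.sum_le_sum fun i _ => hG i ω
  have hmul : ‖W * K * R‖ ≤ ‖W‖ * ‖K‖ * ‖R‖ :=
    (frobenius_norm_mul _ _).trans <| by gcongr; exact frobenius_norm_mul _ _
  calc ‖W * K * R‖ ^ 2 * (1 + ω ^ 2) ≤ (‖W‖ * ‖K‖ * ‖R‖) ^ 2 * (1 + ω ^ 2) := by gcongr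
    _ = (‖W‖ * ‖R‖) ^ 2 * (‖K‖ ^ 2 * (1 + ω ^ 2)) := by ring
    _ ≤ (‖W‖ * ‖R‖) ^ 2 * ∑ i, C i := by gcongr

end Frobenius

section Resolvent

variable {ι : Type*} [Fintype ι] [DecidableEq ι]

lemma ae_isUnit_det_smul_one_sub (H : Matrix ι ι ℂ) :
    ∀ᵐ ω : ℝ, IsUnit (((ω : ℂ) * I) • (1 : Matrix ι ι ℂ) - H).det := by
  have hinj : Injective fun ω : ℝ => (ω : ℂ) * I := fun a b hab => by
    simpa using congrArg im hab
  have hfin : {ω : ℝ | ¬IsUnit (((ω : ℂ) * I) • (1 : Matrix ι ι ℂ) - H).det}.Finite := by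
    refine ((Matrix.finite_spectrum H).preimage hinj.injOn).subset fun ω hω => ?_
    rwa [Set.mem_preimage, spectrum.mem_iff, Algebra.algebraMap_eq_smul_one,
      isUnit_iff_isUnit_det]
  exact ae_iff.2 (hfin.measure_zero _)

lemma IsHurwitz.isUnit_det_smul_one_sub {q : ℕ} {H : Matrix (Fin q) (Fin q) ℂ} (hH : IsHurwitz H)
    (ω : ℝ) : IsUnit (((ω : ℂ) * I) • (1 : Matrix (Fin q) (Fin q) ℂ) - H).det := by
  by_contra hsing
  have hmem : (ω : ℂ) * I ∈ spectrum ℂ H := by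
    rwa [spectrum.mem_iff, Algebra.algebraMap_eq_smul_one, isUnit_iff_isUnit_det]
  simpa using hH _ hmem

lemma continuous_resolvent {H : Matrix ι ι ℂ}
    (hH : ∀ ω : ℝ, IsUnit (((ω : ℂ) * I) • (1 : Matrix ι ι ℂ) - H).det) :
    Continuous fun ω : ℝ => (((ω : ℂ) * I) • (1 : Matrix ι ι ℂ) - H)⁻¹ := by
  have hT : Continuous fun ω : ℝ => ((ω : ℂ) * I) • (1 : Matrix ι ι ℂ) - H := by fun_prop
  refine continuous_iff_continuousAt.2 fun ω => (continuousAt_matrix_inv _ ?_).comp hT.continuousAt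
  exact NormedRing.inverse_continuousAt (hH ω).unit

attribute [local instance] Matrix.frobeniusNormedAddCommGroup Matrix.frobeniusNormSMulClass

lemma norm_resolvent_mul_norm_le {H : Matrix ι ι ℂ} {z : ℂ} (hz : 2 * ‖H‖ ≤ ‖z‖)
    (hdet : IsUnit (z • (1 : Matrix ι ι ℂ) - H).det) :
    ‖(z • (1 : Matrix ι ι ℂ) - H)⁻¹‖ * ‖z‖ ≤ 2 * ‖(1 : Matrix ι ι ℂ)‖ := by
  set G := (z • (1 : Matrix ι ι ℂ) - H)⁻¹
  have hG : z • G = 1 + H * G := by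
    have h := mul_nonsing_inv _ hdet
    rw [Matrix.sub_mul, Matrix.smul_mul, Matrix.one_mul] at h
    rw [← h, sub_add_cancel]
  have hle : ‖z‖ * ‖G‖ ≤ ‖(1 : Matrix ι ι ℂ)‖ + ‖H‖ * ‖G‖ := by
    rw [← norm_smul, hG]
    calc ‖1 + H * G‖ ≤ ‖(1 : Matrix ι ι ℂ)‖ + ‖H * G‖ := norm_add_le _ _
      _ ≤ ‖(1 : Matrix ι ι ℂ)‖ + ‖H‖ * ‖G‖ := by gcongr; exact frobenius_norm_mul H G
  nlinarith [norm_nonneg G]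

lemma exists_sq_norm_resolvent_mul_le {H : Matrix ι ι ℂ}
    (hH : ∀ ω : ℝ, IsUnit (((ω : ℂ) * I) • (1 : Matrix ι ι ℂ) - H).det) :
    ∃ C, ∀ ω : ℝ, ‖(((ω : ℂ) * I) • (1 : Matrix ι ι ℂ) - H)⁻¹‖ ^ 2 * (1 + ω ^ 2) ≤ C := by
  set G := fun ω : ℝ => (((ω : ℂ) * I) • (1 : Matrix ι ι ℂ) - H)⁻¹
  set R := max 1 (2 * ‖H‖)
  obtain ⟨C₁, hC₁⟩ := (isCompact_Icc (a := -R) (b := R)).exists_bound_of_continuousOn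
    (((continuous_resolvent hH).norm.pow 2).mul
      (by fun_prop : Continuous fun ω : ℝ => 1 + ω ^ 2)).continuousOn
  refine ⟨max C₁ (2 * (2 * ‖(1 : Matrix ι ι ℂ)‖) ^ 2), fun ω => ?_⟩
  rcases le_or_gt |ω| R with hω | hω
  · exact le_max_of_le_left <| (le_abs_self _).trans (hC₁ ω (abs_le.mp hω))
  · have hfar : ‖G ω‖ * |ω| ≤ 2 * ‖(1 : Matrix ι ι ℂ)‖ := by
      have h := norm_resolvent_mul_norm_le (H := H) (z := (ω : ℂ) * I) ?_ (hH ω)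
      · simpa using h
      · simpa using (le_max_right _ _).trans hω.le
    have h1 : 1 ≤ ω ^ 2 := by nlinarith [le_max_left 1 (2 * ‖H‖), sq_abs ω]
    refine le_max_of_le_right ?_
    calc ‖G ω‖ ^ 2 * (1 + ω ^ 2) ≤ 2 * (‖G ω‖ * |ω|) ^ 2 := by
          rw [mul_pow, sq_abs]; nlinarith [sq_nonneg ‖G ω‖]
      _ ≤ 2 * (2 * ‖(1 : Matrix ι ι ℂ)‖) ^ 2 := by gcongr

lemma continuous_and_decay_smul_resolvent {H : Matrix ι ι ℂ} (c : ℂ)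
    (hH : c ≠ 0 → ∀ ω : ℝ, IsUnit (((ω : ℂ) * I) • (1 : Matrix ι ι ℂ) - H).det) :
    (Continuous fun ω : ℝ => c • (((ω : ℂ) * I) • (1 : Matrix ι ι ℂ) - H)⁻¹) ∧
      ∃ C, ∀ ω : ℝ, ‖c • (((ω : ℂ) * I) • (1 : Matrix ι ι ℂ) - H)⁻¹‖ ^ 2 * (1 + ω ^ 2) ≤ C := by
  rcases eq_or_ne c 0 with rfl | hc
  · simp only [zero_smul, norm_zero]
    exact ⟨continuous_const, 0, fun ω => by simp⟩
  obtain ⟨C, hC⟩ := exists_sq_norm_resolvent_mul_le (hH hc)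
  refine ⟨(continuous_resolvent (hH hc)).const_smul c, ‖c‖ ^ 2 * C, fun ω => ?_⟩
  rw [norm_smul, mul_pow, mul_assoc]
  exact mul_le_mul_of_nonneg_left (hC ω) (by positivity)

end Resolvent

section H2

attribute [local instance] Matrix.frobeniusNormedAddCommGroup

variable {α β : Type*} [Fintype α] [Fintype β]

lemma memLp_two_of_continuous_of_decay {F : ℝ → Matrix α β ℂ} (hF : Continuous F) {C : ℝ}
    (hC : ∀ ω, ‖F ω‖ ^ 2 * (1 + ω ^ 2) ≤ C) : MemLp F 2 := by
  have : TopologicalSpace.PseudoMetrizableSpace (Matrix α β ℂ) :=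
    inferInstanceAs (TopologicalSpace.PseudoMetrizableSpace (α → β → ℂ))
  refine (memLp_two_iff_integrable_sq_norm hF.aestronglyMeasurable).2 <|
    (integrable_inv_one_add_sq.const_mul C).mono' (hF.norm.pow 2).aestronglyMeasurable
      (ae_of_all _ fun ω => ?_)
  rw [norm_pow, norm_norm, ← div_eq_mul_inv, le_div_iff₀ (by positivity)]
  exact hC ω

lemma H2normSq_eq_integral_sq_norm {S : ℂ → Matrix α β ℂ}
    (hS : ∀ ω : ℝ, (S (-((ω : ℂ) * I)))ᵀ = (S ((ω : ℂ) * I))ᴴ) :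
    H2normSq S = 1 / (2 * Real.pi) * ∫ ω : ℝ, ‖S ((ω : ℂ) * I)‖ ^ 2 := by
  simp only [H2normSq, hS, sq_frobenius_norm_eq_re_trace]

lemma H2normSq_sub_eq_of_ae_eq_mul [DecidableEq α] {S T : ℂ → Matrix α β ℂ}
    {Q : Matrix α α ℂ} (hQ : IsStarProjection Q)
    (hS : ∀ ω : ℝ, (S (-((ω : ℂ) * I)))ᵀ = (S ((ω : ℂ) * I))ᴴ)
    (hT : ∀ ω : ℝ, (T (-((ω : ℂ) * I)))ᵀ = (T ((ω : ℂ) * I))ᴴ)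
    (hTS : ∀ᵐ ω : ℝ, T ((ω : ℂ) * I) = Q * S ((ω : ℂ) * I))
    (hS2 : MemLp (fun ω : ℝ => S ((ω : ℂ) * I)) 2) :
    H2normSq (fun s => S s - T s) = H2normSq S - H2normSq T := by
  have hSm := hS2.aestronglyMeasurable
  have hSi := (memLp_two_iff_integrable_sq_norm hSm).1 hS2
  have hsplit (R : Matrix α α ℂ) (hR : IsStarProjection R) (ω : ℝ) :=
    sq_frobenius_norm_eq_add_of_isStarProjection hR (S ((ω : ℂ) * I))
  have hint (R : Matrix α α ℂ) (hR : IsStarProjection R) :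
      Integrable fun ω : ℝ => ‖R * S ((ω : ℂ) * I)‖ ^ 2 := by
    have hRm : Continuous fun X : Matrix α β ℂ => ‖R * X‖ ^ 2 :=
      (continuous_norm.comp (continuous_const.matrix_mul continuous_id)).pow 2
    refine hSi.mono (hRm.comp_aestronglyMeasurable hSm) (ae_of_all _ fun ω => ?_)
    simp only [norm_pow, norm_norm]
    rw [hsplit R hR ω]
    nlinarith [sq_nonneg ‖(1 - R) * S ((ω : ℂ) * I)‖]
  have hdiff : (fun ω : ℝ => ‖S ((ω : ℂ) * I) - T ((ω : ℂ) * I)‖ ^ 2)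
      =ᵐ[volume] fun ω => ‖(1 - Q) * S ((ω : ℂ) * I)‖ ^ 2 :=
    hTS.mono fun ω h => by simp only [h, Matrix.sub_mul, Matrix.one_mul]
  have hproj : (fun ω : ℝ => ‖T ((ω : ℂ) * I)‖ ^ 2)
      =ᵐ[volume] fun ω => ‖Q * S ((ω : ℂ) * I)‖ ^ 2 :=
    hTS.mono fun ω h => by simp only [h]
  rw [H2normSq_eq_integral_sq_norm hS, H2normSq_eq_integral_sq_norm hT,
    H2normSq_eq_integral_sq_norm fun ω => by simp only [transpose_sub, conjTranspose_sub, hS, hT],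
    integral_congr_ae hdiff, integral_congr_ae hproj, funext (hsplit Q hQ),
    integral_add (hint Q hQ) (hint _ hQ.one_sub)]
  ring

end H2

section Network

variable {N k n r m : ℕ} (L : Matrix (Fin N) (Fin N) ℝ) (A B : Matrix (Fin n) (Fin n) ℝ)
  (E : Matrix (Fin n) (Fin r) ℝ) (M : Matrix (Fin N) (Fin m) ℝ)

lemma netS_eq_of_spectral {U : Matrix (Fin N) (Fin N) ℝ} {d : Fin N → ℝ} (hU : U * Uᵀ = 1)
    (hL : L = U * diagonal d * Uᵀ) {s : ℂ}
    (hs : ∀ i, IsUnit (s • (1 : Matrix (Fin n) (Fin n) ℂ) - cplx (A - d i • B)).det) :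
    netS L A B E M s = cplx (U ⊗ₖ (1 : Matrix (Fin n) (Fin n) ℝ)) *
      reindex (Equiv.prodComm _ _) (Equiv.prodComm _ _) (blockDiagonal fun i =>
        (d i : ℂ) • (s • (1 : Matrix (Fin n) (Fin n) ℂ) - cplx (A - d i • B))⁻¹) *
      cplx ((Uᵀ * M) ⊗ₖ E) := by
  set W := cplx (U ⊗ₖ (1 : Matrix (Fin n) (Fin n) ℝ))
  set Wt := cplx (Uᵀ ⊗ₖ (1 : Matrix (Fin n) (Fin n) ℝ))
  have hW : W * Wt = 1 := by
    rw [← cplx_mul, ← mul_kronecker_mul, hU, Matrix.one_mul, one_kronecker_one, cplx_one]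
  have hblock : cplx (diagonal d ⊗ₖ (1 : Matrix (Fin n) (Fin n) ℝ)) *
      (s • 1 - cplx ((1 : Matrix (Fin N) (Fin N) ℝ) ⊗ₖ A - diagonal d ⊗ₖ B))⁻¹ =
      reindex (Equiv.prodComm _ _) (Equiv.prodComm _ _) (blockDiagonal fun i =>
        (d i : ℂ) • (s • (1 : Matrix (Fin n) (Fin n) ℂ) - cplx (A - d i • B))⁻¹) := by
    rw [one_kronecker_sub_diagonal_kronecker, diagonal_kronecker, cplx_reindex_blockDiagonal,
      cplx_reindex_blockDiagonal, reindex_mul_resolvent]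
    simp only [cplx_smul, cplx_one]
    rw [blockDiagonal_mul_resolvent _ hs]
  have hR : cplx ((Uᵀ * M) ⊗ₖ E) = Wt * cplx (M ⊗ₖ E) := by
    rw [← cplx_mul, ← mul_kronecker_mul, Matrix.one_mul]
  rw [netS, hL, conj_kronecker, one_kronecker_sub_conj_kronecker hU]
  simp only [cplx_mul]
  rw [resolvent_conj hW, ← hblock, hR]
  have hW' : Wt * W = 1 := mul_eq_one_comm.mp hW
  simp only [Matrix.mul_assoc]
  rw [← Matrix.mul_assoc Wt W, hW', Matrix.one_mul]

attribute [local instance] Matrix.frobeniusNormedAddCommGroup in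
lemma memLp_two_netS (hL : L.IsHermitian)
    (hsync : ∀ lam ∈ spectrum ℝ L, lam ≠ 0 → IsHurwitz (cplx (A - lam • B))) :
    MemLp (fun ω : ℝ => netS L A B E M ((ω : ℂ) * I)) 2 := by
  obtain ⟨U, hU, hLU⟩ := hL.exists_orthogonal_diagonalization
  set d := hL.eigenvalues
  have hblocks (i : Fin N) := continuous_and_decay_smul_resolvent (d i : ℂ)
    (H := cplx (A - d i • B)) fun hd =>
      (hsync _ (hL.eigenvalues_mem_spectrum_real i) (by exact_mod_cast hd)).isUnit_det_smul_one_sub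
  choose hcont C hC using hblocks
  refine MemLp.ae_eq ?_ (memLp_two_of_continuous_of_decay ?_
    (sq_norm_mul_reindex_blockDiagonal_mul_le (Equiv.prodComm _ _) hC
      (cplx (U ⊗ₖ (1 : Matrix (Fin n) (Fin n) ℝ))) (cplx ((Uᵀ * M) ⊗ₖ E))))
  · filter_upwards [ae_all_iff.2 fun i => ae_isUnit_det_smul_one_sub (cplx (A - d i • B))]
      with ω hω
    exact (netS_eq_of_spectral L A B E M hU hLU hω).symm
  · exact (continuous_const.matrix_mul ((continuous_pi hcont).matrix_blockDiagonal.matrix_reindex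
      _ _)).matrix_mul continuous_const

lemma netShat_eq_cplx_mul_netS {P : Matrix (Fin N) (Fin k) ℝ} {Lhat : Matrix (Fin k) (Fin k) ℝ}
    {Mhat : Matrix (Fin k) (Fin m) ℝ} {Pr : Matrix (Fin N) (Fin N) ℝ} (hLP : L * P = P * Lhat)
    (hPrL : Pr * L = L * Pr) (hPrM : Pr * M = P * Mhat) {s : ℂ}
    (hS : IsUnit (s • 1 - cplx ((1 : Matrix (Fin N) (Fin N) ℝ) ⊗ₖ A - L ⊗ₖ B)).det)
    (hShat : IsUnit (s • 1 - cplx ((1 : Matrix (Fin k) (Fin k) ℝ) ⊗ₖ A - Lhat ⊗ₖ B)).det) :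
    netShat L P Lhat Mhat A B E s =
      cplx (Pr ⊗ₖ (1 : Matrix (Fin n) (Fin n) ℝ)) * netS L A B E M s := by
  have hLP1 : cplx ((L * P) ⊗ₖ (1 : Matrix (Fin n) (Fin n) ℝ)) =
      cplx (L ⊗ₖ (1 : Matrix (Fin n) (Fin n) ℝ)) * cplx (P ⊗ₖ (1 : Matrix (Fin n) (Fin n) ℝ)) := by
    rw [← cplx_mul, ← mul_kronecker_mul, Matrix.one_mul]
  rw [netShat, netS, hLP1]
  refine mul_resolvent_mul_eq_of_intertwine hS hShat ?_ ?_ ?_ ?_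
  · rw [← cplx_mul, ← cplx_mul, one_kronecker_sub_kronecker_mul hLP]
  · rw [← cplx_mul, ← cplx_mul, one_kronecker_sub_kronecker_mul hPrL.symm]
  · rw [← cplx_mul, ← cplx_mul, ← mul_kronecker_mul, ← mul_kronecker_mul, hPrL]
  · rw [← cplx_mul, ← cplx_mul, ← mul_kronecker_mul, ← mul_kronecker_mul, hPrM]

end Network

theorem stmt7_general {N k n r m : ℕ} (L : Matrix (Fin N) (Fin N) ℝ)
    (hLpsd : L.PosSemidef)
    (A B : Matrix (Fin n) (Fin n) ℝ) (E : Matrix (Fin n) (Fin r) ℝ)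
    (M : Matrix (Fin N) (Fin m) ℝ)
    (hsync : ∀ lam ∈ spectrum ℝ L, lam ≠ 0 → IsHurwitz (cplx (A - lam • B)))
    (c : Fin N → Fin k) (hc : Function.Surjective c)
    (P : Matrix (Fin N) (Fin k) ℝ)
    (hP : P = Matrix.of fun i j => if c i = j then 1 else 0)
    (hAEP : Submodule.map L.mulVecLin (LinearMap.range P.mulVecLin) ≤
      LinearMap.range P.mulVecLin)
    (Lhat : Matrix (Fin k) (Fin k) ℝ) (hLhat : Lhat = (Pᵀ * P)⁻¹ * (Pᵀ * L * P))
    (Mhat : Matrix (Fin k) (Fin m) ℝ) (hMhat : Mhat = (Pᵀ * P)⁻¹ * (Pᵀ * M)) :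
    H2normSq (fun s => netS L A B E M s - netShat L P Lhat Mhat A B E s) =
      H2normSq (netS L A B E M) - H2normSq (netShat L P Lhat Mhat A B E) := by
  have hPtP : IsUnit (Pᵀ * P).det := hP ▸ isUnit_det_transpose_mul_self_of_surjective hc
  have hLt : Lᵀ = L := by simpa [conjTranspose_eq_transpose_of_trivial] using hLpsd.1.eq
  have hLP : L * P = P * Lhat := hLhat ▸ mul_eq_mul_of_map_range_le hPtP hAEP
  have hPrM : rangeProj P * M = P * Mhat := by rw [hMhat, rangeProj]; simp only [Matrix.mul_assoc]
  refine H2normSq_sub_eq_of_ae_eq_mul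
    (isStarProjection_cplx_kronecker_one (rangeProj_mul_rangeProj hPtP) transpose_rangeProj)
    (transpose_cplx_mul_resolvent_mul_neg_mul_I _ _ _)
    (transpose_cplx_mul_resolvent_mul_neg_mul_I _ _ _) ?_ (memLp_two_netS L A B E M hLpsd.1 hsync)
  filter_upwards
    [ae_isUnit_det_smul_one_sub (cplx ((1 : Matrix (Fin N) (Fin N) ℝ) ⊗ₖ A - L ⊗ₖ B)),
      ae_isUnit_det_smul_one_sub (cplx ((1 : Matrix (Fin k) (Fin k) ℝ) ⊗ₖ A - Lhat ⊗ₖ B))]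
    with ω hS hShat
  exact netShat_eq_cplx_mul_netS L A B E M hLP (rangeProj_mul_comm hPtP hLt hLP) hPrM hS hShat

/-- for clustering according to an almost equitable partition the H₂ error
satisfies `‖S − Ŝ‖²_{H₂} = ‖S‖²_{H₂} − ‖Ŝ‖²_{H₂}`. -/
theorem stmt7 {N k n r m : ℕ} (hm : 0 < m) (L : Matrix (Fin N) (Fin N) ℝ)
    (hLpsd : L.PosSemidef) (hL1 : L.mulVec (fun _ => 1) = 0)
    (hLker : LinearMap.ker L.mulVecLin = Submodule.span ℝ {(fun _ => 1 : Fin N → ℝ)})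
    (A B : Matrix (Fin n) (Fin n) ℝ) (E : Matrix (Fin n) (Fin r) ℝ)
    (v : Fin m → Fin N) (hv : Function.Injective v)
    (M : Matrix (Fin N) (Fin m) ℝ)
    (hM : M = Matrix.of fun i j => if i = v j then 1 else 0)
    (hsync : ∀ lam ∈ spectrum ℝ L, lam ≠ 0 → IsHurwitz (cplx (A - lam • B)))
    (c : Fin N → Fin k) (hc : Function.Surjective c)
    (P : Matrix (Fin N) (Fin k) ℝ)
    (hP : P = Matrix.of fun i j => if c i = j then 1 else 0)
    (hAEP : Submodule.map L.mulVecLin (LinearMap.range P.mulVecLin) ≤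
      LinearMap.range P.mulVecLin)
    (Lhat : Matrix (Fin k) (Fin k) ℝ) (hLhat : Lhat = (Pᵀ * P)⁻¹ * (Pᵀ * L * P))
    (Mhat : Matrix (Fin k) (Fin m) ℝ) (hMhat : Mhat = (Pᵀ * P)⁻¹ * (Pᵀ * M)) :
    H2normSq (fun s => netS L A B E M s - netShat L P Lhat Mhat A B E s) =
      H2normSq (netS L A B E M) - H2normSq (netShat L P Lhat Mhat A B E) :=
  stmt7_general L hLpsd A B E M hsync c hc P hP hAEP Lhat hLhat Mhat hMhat
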